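/- arXiv:1512.06193 — 2 statements merged into one kernel-verified Lean document; each statement's English description precedes it below -/
import Mathlib

section
/- The partition (8, 6 | 5, 0 | -2) of type (2,2,1) is Ulrich, and it is the unique Ulrich partition (A | 5, 0 | C) with middle block {5, 0} whose first intersection (at time t = 1) occurs between the A-block and the middle block. -/
/-- A list of integers is strictly decreasing. -/
def StrictDec (l : List ℤ) : Prop := l.Chain' (· > ·)

/-- Time evolution of a three-block partition `(A | B | C)`: subtract `t` from each entry of
the first block, keep the middle block fixed, add `t` to each entry of the last block. -/
def evolve3 (A B C : List ℤ) (t : ℤ) : List ℤ := A.map (· - t) ++ B ++ C.map (· + t)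

/-- A list has exactly one repeated entry: the number of distinct values is one less
than the length. -/
def OneRepeat (l : List ℤ) : Prop := l.toFinset.card + 1 = l.length

/-- The dimension of a three-block partition of type `(α, β, γ)` is `αβ + αγ + βγ`. -/
def dim3 (A B C : List ℤ) : ℕ := A.length * B.length + A.length * C.length + B.length * C.length

/-- A three-block partition is Ulrich: it is a strictly decreasing sequence (with nonempty
outer blocks), and for every time `t ∈ {1, ..., N}` (N the dimension) the evolved list `P(t)`
has exactly one repeated entry. -/
def IsUlrich3 (A B C : List ℤ) : Prop :=
  A ≠ [] ∧ C ≠ [] ∧ StrictDec (evolve3 A B C 0) ∧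
    ∀ t : ℕ, 1 ≤ t → t ≤ dim3 A B C → OneRepeat (evolve3 A B C (t : ℤ))

/-!
Two entries from different blocks of `P(t)` coincide at most once in time, there are exactly
`N` such cross pairs, and every time `t ∈ [1, N]` sees a coincidence. By pigeonhole every cross
pair therefore meets exactly once in `[1, N]`, and distinct pairs meet at distinct times.

For the middle block `(5, 0)` with `6 ∈ A`, an `A`–`C` pair meets at time `(a - c) / 2`, so all
entries are even; the meetings at times 2 and 3 force `-2 ∈ C` and `8 ∈ A`. The last meeting
time `N` is the larger of `max A` (pair `(max A, 0)`) and `5 - min C` (pair `(5, min C)`), which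
differ since distinct pairs meet at distinct times. The meeting one or two steps before `N` then
yields a second `A`–`C` pair with the same difference as a known one, which is impossible
unless `max A = 8 > 5 - min C`.
-/

theorem Finset.exists_unique_rel_of_card_le {α β : Type*} {P : Finset α} {S : Finset β}
    {R : α → β → Prop} (hcard : P.card ≤ S.card) (hR : ∀ p t s, R p t → R p s → t = s)
    (hS : ∀ t ∈ S, ∃ p ∈ P, R p t) :
    ∀ p ∈ P, ∃ t ∈ S, R p t ∧ ∀ q ∈ P, R q t → q = p := by
  choose f hfP hfR using hS
  have hsurj := Finset.surj_on_of_inj_on_of_card_le f hfP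
    (fun t s ht hs hts => hR _ _ _ (hfR t ht) (hts ▸ hfR s hs)) hcard
  intro p hp
  obtain ⟨t, ht, rfl⟩ := hsurj p hp
  refine ⟨t, ht, hfR t ht, fun q hq hqt => ?_⟩
  obtain ⟨s, hs, rfl⟩ := hsurj q hq
  obtain rfl := hR _ _ _ (hfR s hs) hqt
  rfl

abbrev CrossPair := (ℤ × ℤ) ⊕ (ℤ × ℤ) ⊕ (ℤ × ℤ)

-- Tagging by `Sum` keeps apart pairs from different blocks even when their values agree.
def crossPairs (A B C : List ℤ) : Finset CrossPair :=
  (A.toFinset ×ˢ B.toFinset).disjSum ((A.toFinset ×ˢ C.toFinset).disjSum (B.toFinset ×ˢ C.toFinset))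

def Collide : CrossPair → ℤ → Prop
  | .inl (a, b), t => a - t = b
  | .inr (.inl (a, c)), t => a - t = c + t
  | .inr (.inr (b, c)), t => b = c + t

theorem Collide.time_eq {p : CrossPair} {t s : ℤ} (ht : Collide p t) (hs : Collide p s) :
    t = s := by
  rcases p with ⟨a, b⟩ | ⟨a, c⟩ | ⟨b, c⟩ <;> simp only [Collide] at ht hs <;> omega

variable {A B C : List ℤ}

theorem card_crossPairs (hA : A.Nodup) (hB : B.Nodup) (hC : C.Nodup) :
    (crossPairs A B C).card = dim3 A B C := by
  simp only [crossPairs, dim3, Finset.card_disjSum, Finset.card_product,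
    List.toFinset_card_of_nodup, hA, hB, hC, add_assoc]

theorem exists_collide_of_not_nodup (hA : A.Nodup) (hB : B.Nodup) (hC : C.Nodup) {t : ℤ}
    (h : ¬ (evolve3 A B C t).Nodup) : ∃ p ∈ crossPairs A B C, Collide p t := by
  contrapose! h
  have hAt : (A.map (· - t)).Nodup := hA.map sub_left_injective
  have hCt : (C.map (· + t)).Nodup := hC.map (add_left_injective t)
  simp only [evolve3, List.nodup_append, hAt, hB, hCt, true_and, List.mem_append, List.mem_map]
  refine ⟨?_, ?_⟩
  · rintro _ ⟨a, ha, rfl⟩ b hb hab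
    exact h (.inl (a, b)) (by simp [crossPairs, ha, hb]) hab
  · rintro _ (⟨a, ha, rfl⟩ | hb) _ ⟨c, hc, rfl⟩ hac
    · exact h (.inr (.inl (a, c))) (by simp [crossPairs, ha, hc]) hac
    · exact h (.inr (.inr (_, c))) (by simp [crossPairs, hb, hc]) hac

theorem OneRepeat.not_nodup {l : List ℤ} (h : OneRepeat l) : ¬ l.Nodup := fun hl => by
  have := List.toFinset_card_of_nodup hl
  unfold OneRepeat at h
  omega

namespace IsUlrich3

theorem pairwise_gt (h : IsUlrich3 A B C) : (A ++ B ++ C).Pairwise (· > ·) := by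
  have := h.2.2.1
  simp only [StrictDec, evolve3, sub_zero, add_zero, List.map_id'] at this
  exact List.isChain_iff_pairwise.mp this

theorem nodup_left (h : IsUlrich3 A B C) : A.Nodup :=
  (List.pairwise_append.mp (List.pairwise_append.mp h.pairwise_gt).1).1.imp ne_of_gt

theorem nodup_middle (h : IsUlrich3 A B C) : B.Nodup :=
  (List.pairwise_append.mp (List.pairwise_append.mp h.pairwise_gt).1).2.1.imp ne_of_gt

theorem nodup_right (h : IsUlrich3 A B C) : C.Nodup :=
  (List.pairwise_append.mp h.pairwise_gt).2.1.imp ne_of_gt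

theorem lt_of_mem_left (h : IsUlrich3 A B C) {a b : ℤ} (ha : a ∈ A) (hb : b ∈ B) : b < a :=
  (List.pairwise_append.mp (List.pairwise_append.mp h.pairwise_gt).1).2.2 a ha b hb

theorem lt_of_mem_right (h : IsUlrich3 A B C) {b c : ℤ} (hb : b ∈ B) (hc : c ∈ C) : c < b :=
  (List.pairwise_append.mp h.pairwise_gt).2.2 b (List.mem_append_right A hb) c hc

theorem exists_collide_at (h : IsUlrich3 A B C) {t : ℤ} (ht₁ : 1 ≤ t) (ht₂ : t ≤ dim3 A B C) :
    ∃ p ∈ crossPairs A B C, Collide p t := by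
  lift t to ℕ using by omega
  exact exists_collide_of_not_nodup h.nodup_left h.nodup_middle h.nodup_right
    (h.2.2.2 t (by exact_mod_cast ht₁) (by exact_mod_cast ht₂)).not_nodup

theorem exists_collide_unique (h : IsUlrich3 A B C) :
    ∀ p ∈ crossPairs A B C, ∃ t ∈ Finset.Icc (1 : ℤ) (dim3 A B C),
      Collide p t ∧ ∀ q ∈ crossPairs A B C, Collide q t → q = p := by
  refine Finset.exists_unique_rel_of_card_le ?_ (fun _ _ _ => Collide.time_eq) ?_
  · rw [card_crossPairs h.nodup_left h.nodup_middle h.nodup_right, Int.card_Icc]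
    omega
  · intro t ht
    rw [Finset.mem_Icc] at ht
    exact h.exists_collide_at ht.1 ht.2

theorem exists_collide (h : IsUlrich3 A B C) {p : CrossPair} (hp : p ∈ crossPairs A B C) :
    ∃ t : ℤ, 1 ≤ t ∧ t ≤ dim3 A B C ∧ Collide p t := by
  obtain ⟨t, ht, hpt, -⟩ := h.exists_collide_unique p hp
  rw [Finset.mem_Icc] at ht
  exact ⟨t, ht.1, ht.2, hpt⟩

theorem eq_of_collide (h : IsUlrich3 A B C) {p q : CrossPair} (hp : p ∈ crossPairs A B C)
    (hq : q ∈ crossPairs A B C) {t : ℤ} (hpt : Collide p t) (hqt : Collide q t) : p = q := by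
  obtain ⟨s, -, hps, hunique⟩ := h.exists_collide_unique p hp
  obtain rfl := hpt.time_eq hps
  exact (hunique q hq hqt).symm

theorem exists_collision (h : IsUlrich3 A B C) {t : ℤ} (ht₁ : 1 ≤ t) (ht₂ : t ≤ dim3 A B C) :
    (∃ a ∈ A, a - t ∈ B) ∨ (∃ a ∈ A, ∃ c ∈ C, a - t = c + t) ∨ ∃ c ∈ C, c + t ∈ B := by
  obtain ⟨⟨a, b⟩ | ⟨a, c⟩ | ⟨b, c⟩, hp, hpt⟩ := h.exists_collide_at ht₁ ht₂ <;>
    simp only [crossPairs, Finset.inl_mem_disjSum, Finset.inr_mem_disjSum, Finset.mem_product,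
      List.mem_toFinset] at hp <;> simp only [Collide] at hpt
  · exact .inl ⟨a, hp.1, hpt ▸ hp.2⟩
  · exact .inr (.inl ⟨a, hp.1, c, hp.2, hpt⟩)
  · exact .inr (.inr ⟨c, hp.2, hpt ▸ hp.1⟩)

theorem sub_le_dim3_of_mem_left (h : IsUlrich3 A B C) {a b : ℤ} (ha : a ∈ A) (hb : b ∈ B) :
    a - b ≤ dim3 A B C := by
  obtain ⟨t, -, ht, hab⟩ := h.exists_collide (p := .inl (a, b)) (by simp [crossPairs, ha, hb])
  simp only [Collide] at hab
  omega

theorem sub_le_dim3_of_mem_right (h : IsUlrich3 A B C) {b c : ℤ} (hb : b ∈ B) (hc : c ∈ C) :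
    b - c ≤ dim3 A B C := by
  obtain ⟨t, -, ht, hbc⟩ :=
    h.exists_collide (p := .inr (.inr (b, c))) (by simp [crossPairs, hb, hc])
  simp only [Collide] at hbc
  omega

theorem two_dvd_sub (h : IsUlrich3 A B C) {a c : ℤ} (ha : a ∈ A) (hc : c ∈ C) : 2 ∣ a - c := by
  obtain ⟨t, -, -, hac⟩ :=
    h.exists_collide (p := .inr (.inl (a, c))) (by simp [crossPairs, ha, hc])
  simp only [Collide] at hac
  exact ⟨t, by omega⟩

theorem eq_of_sub_eq_sub (h : IsUlrich3 A B C) {a₁ a₂ c₁ c₂ : ℤ} (ha₁ : a₁ ∈ A) (ha₂ : a₂ ∈ A)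
    (hc₁ : c₁ ∈ C) (hc₂ : c₂ ∈ C) (hac : a₁ - c₁ = a₂ - c₂) : a₁ = a₂ := by
  have hp₁ : .inr (.inl (a₁, c₁)) ∈ crossPairs A B C := by simp [crossPairs, ha₁, hc₁]
  obtain ⟨t, -, -, ht⟩ := h.exists_collide hp₁
  simp only [Collide] at ht
  have := h.eq_of_collide hp₁ (q := .inr (.inl (a₂, c₂))) (by simp [crossPairs, ha₂, hc₂])
    ht (by simp only [Collide]; omega)
  simp only [Sum.inr.injEq, Sum.inl.injEq, Prod.mk.injEq] at this
  exact this.1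

theorem sub_ne_sub (h : IsUlrich3 A B C) {a b b' c : ℤ} (ha : a ∈ A) (hb : b ∈ B) (hb' : b' ∈ B)
    (hc : c ∈ C) : a - b ≠ b' - c := fun hab => by
  have := h.eq_of_collide (p := .inl (a, b)) (q := .inr (.inr (b', c)))
    (by simp [crossPairs, ha, hb]) (by simp [crossPairs, hb', hc]) (t := a - b)
    (by simp only [Collide]; omega) (by simp only [Collide]; omega)
  simp at this

theorem five_le_dim3 (h : IsUlrich3 A [5, 0] C) : 5 ≤ dim3 A [5, 0] C := by
  have hA := List.length_pos_iff.mpr h.1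
  have hC := List.length_pos_iff.mpr h.2.1
  simp only [dim3, List.length_cons, List.length_nil]
  nlinarith

theorem five_lt_of_mem_left (h : IsUlrich3 A [5, 0] C) {a : ℤ} (ha : a ∈ A) : 5 < a :=
  h.lt_of_mem_left ha (by simp)

theorem neg_of_mem_right (h : IsUlrich3 A [5, 0] C) {c : ℤ} (hc : c ∈ C) : c < 0 :=
  h.lt_of_mem_right (by simp) hc

theorem exists_collision_five_zero (h : IsUlrich3 A [5, 0] C) {t : ℤ} (ht₁ : 1 ≤ t)
    (ht₂ : t ≤ dim3 A [5, 0] C) :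
    (∃ a ∈ A, a - t = 5 ∨ a - t = 0) ∨ (∃ a ∈ A, ∃ c ∈ C, a - t = c + t) ∨
      ∃ c ∈ C, c + t = 5 ∨ c + t = 0 := by
  simpa using h.exists_collision ht₁ ht₂

theorem two_dvd_of_mem_right (h : IsUlrich3 A [5, 0] C) (h6 : 6 ∈ A) {c : ℤ} (hc : c ∈ C) :
    2 ∣ c := by
  have := h.two_dvd_sub h6 hc
  omega

theorem two_dvd_of_mem_left (h : IsUlrich3 A [5, 0] C) (h6 : 6 ∈ A) {a : ℤ} (ha : a ∈ A) :
    2 ∣ a := by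
  obtain ⟨c, hc⟩ := List.exists_mem_of_ne_nil C h.2.1
  have := h.two_dvd_sub ha hc
  have := h.two_dvd_of_mem_right h6 hc
  omega

theorem neg_two_mem_right (h : IsUlrich3 A [5, 0] C) (h6 : 6 ∈ A) : -2 ∈ C := by
  have := h.five_le_dim3
  rcases h.exists_collision_five_zero (t := 2) (by omega) (by omega) with
    ⟨a, ha, hab⟩ | ⟨a, ha, c, hc, hac⟩ | ⟨c, hc, hcb⟩
  · have := h.five_lt_of_mem_left ha
    have := h.two_dvd_of_mem_left h6 ha
    omega
  · have := h.five_lt_of_mem_left ha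
    have := h.neg_of_mem_right hc
    omega
  · have := h.neg_of_mem_right hc
    obtain rfl : c = -2 := by omega
    exact hc

theorem eight_mem_left (h : IsUlrich3 A [5, 0] C) (h6 : 6 ∈ A) : 8 ∈ A := by
  have := h.five_le_dim3
  rcases h.exists_collision_five_zero (t := 3) (by omega) (by omega) with
    ⟨a, ha, hab⟩ | ⟨a, ha, c, hc, hac⟩ | ⟨c, hc, hcb⟩
  · have := h.five_lt_of_mem_left ha
    obtain rfl : a = 8 := by omega
    exact ha
  · have := h.five_lt_of_mem_left ha
    have := h.two_dvd_of_mem_left h6 ha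
    have := h.neg_of_mem_right hc
    have := h.two_dvd_of_mem_right h6 hc
    omega
  · have := h.neg_of_mem_right hc
    have := h.two_dvd_of_mem_right h6 hc
    omega

variable {amax cmin : ℤ}

theorem dim3_le_max (h : IsUlrich3 A [5, 0] C) (hle : ∀ a ∈ A, a ≤ amax)
    (hge : ∀ c ∈ C, cmin ≤ c) : (dim3 A [5, 0] C : ℤ) ≤ max amax (5 - cmin) := by
  have := h.five_le_dim3
  rcases h.exists_collision_five_zero (t := dim3 A [5, 0] C) (by omega) le_rfl with
    ⟨a, ha, hab⟩ | ⟨a, ha, c, hc, hac⟩ | ⟨c, hc, hcb⟩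
  · have := hle a ha
    omega
  · have := hle a ha
    have := hge c hc
    omega
  · have := hge c hc
    omega

theorem not_lt_five_sub (h : IsUlrich3 A [5, 0] C) (h6 : 6 ∈ A) (hle : ∀ a ∈ A, a ≤ amax)
    (hcmin : cmin ∈ C) (hge : ∀ c ∈ C, cmin ≤ c) : ¬ amax < 5 - cmin := fun hlt => by
  have hN := h.dim3_le_max hle hge
  have := h.sub_le_dim3_of_mem_right (b := 5) (by simp) hcmin
  have := h.two_dvd_of_mem_right h6 hcmin
  have := h.neg_of_mem_right hcmin
  -- the meeting at time `N - 2 = 3 - cmin`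
  have hnext : cmin + 2 ∈ C := by
    rcases h.exists_collision_five_zero (t := 3 - cmin) (by omega) (by omega) with
      ⟨a, ha, hab⟩ | ⟨a, ha, c, hc, hac⟩ | ⟨c, hc, hcb⟩
    · have := hle a ha
      have := h.two_dvd_of_mem_left h6 ha
      omega
    · have := hle a ha
      have := hge c hc
      omega
    · have := hge c hc
      obtain rfl : c = cmin + 2 := by omega
      exact hc
  have := h.eq_of_sub_eq_sub h6 (h.eight_mem_left h6) hcmin hnext (by ring)
  omega

theorem eq_eight_of_five_sub_lt (h : IsUlrich3 A [5, 0] C) (h6 : 6 ∈ A) (hamax : amax ∈ A)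
    (hle : ∀ a ∈ A, a ≤ amax) (hge : ∀ c ∈ C, cmin ≤ c) (hlt : 5 - cmin < amax) : amax = 8 := by
  have hN := h.dim3_le_max hle hge
  have := h.sub_le_dim3_of_mem_left (b := 0) hamax (by simp)
  have := h.two_dvd_of_mem_left h6 hamax
  have := h.five_lt_of_mem_left hamax
  -- the meeting at time `N - 1 = amax - 1`
  have hnext : 6 - amax ∈ C := by
    rcases h.exists_collision_five_zero (t := amax - 1) (by omega) (by omega) with
      ⟨a, ha, hab⟩ | ⟨a, ha, c, hc, hac⟩ | ⟨c, hc, hcb⟩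
    · have := hle a ha
      have := h.two_dvd_of_mem_left h6 ha
      omega
    · have := hle a ha
      have := hge c hc
      omega
    · have := h.two_dvd_of_mem_right h6 hc
      obtain rfl : c = 6 - amax := by omega
      exact hc
  exact h.eq_of_sub_eq_sub hamax (h.eight_mem_left h6) (h.neg_two_mem_right h6) hnext (by ring)

theorem eq_of_six_mem (h : IsUlrich3 A [5, 0] C) (h6 : 6 ∈ A) : A = [8, 6] ∧ C = [-2] := by
  obtain ⟨amax, hamax, hle⟩ := A.toFinset.exists_max_image id ⟨6, List.mem_toFinset.mpr h6⟩
  obtain ⟨cmin, hcmin, hge⟩ := C.toFinset.exists_min_image id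
    ⟨-2, List.mem_toFinset.mpr (h.neg_two_mem_right h6)⟩
  simp only [List.mem_toFinset, id] at hamax hle hcmin hge
  have hne : amax ≠ 5 - cmin := by
    simpa using h.sub_ne_sub (b := 0) (b' := 5) hamax (by simp) (by simp) hcmin
  have hlt : 5 - cmin < amax := by
    have := h.not_lt_five_sub h6 hle hcmin hge
    omega
  have h8 := h.eq_eight_of_five_sub_lt h6 hamax hle hge hlt
  have hpw := List.pairwise_append.mp h.pairwise_gt
  constructor
  · refine (List.pairwise_append.mp hpw.1).1.eq_of_mem_iff (by simp) fun a => ⟨fun ha => ?_, ?_⟩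
    · have := hle a ha
      have := h.five_lt_of_mem_left ha
      have := h.two_dvd_of_mem_left h6 ha
      simp only [List.mem_cons, List.not_mem_nil, or_false]
      omega
    · simp only [List.mem_cons, List.not_mem_nil, or_false]
      rintro (rfl | rfl)
      exacts [h.eight_mem_left h6, h6]
  · refine hpw.2.1.eq_of_mem_iff (by simp) fun c => ⟨fun hc => ?_, ?_⟩
    · have := hge c hc
      have := h.neg_of_mem_right hc
      have := h.two_dvd_of_mem_right h6 hc
      simp only [List.mem_cons, List.not_mem_nil, or_false]
      omega
    · simp only [List.mem_cons, List.not_mem_nil, or_false]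
      rintro rfl
      exact h.neg_two_mem_right h6

end IsUlrich3

theorem isUlrich3_eight_six_five_zero_neg_two : IsUlrich3 [8, 6] [5, 0] [-2] := by
  refine ⟨by simp, by simp, List.isChain_iff_pairwise.mpr (by decide), fun t ht₁ ht₂ => ?_⟩
  replace ht₂ : t ≤ 8 := ht₂
  interval_cases t <;> simp only [OneRepeat, evolve3] <;> decide

/-- The partition `(8, 6 | 5, 0 | -2)` of type `(2,2,1)` is Ulrich, and it is the unique
Ulrich partition `(A | 5, 0 | C)` whose time-1 intersection occurs between the `A`-block and
the middle block. -/
theorem stmt10 :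
    IsUlrich3 [8, 6] [5, 0] [-2] ∧
      ∀ A C : List ℤ, IsUlrich3 A [5, 0] C →
        (∃ a ∈ A, a - 1 = 5 ∨ a - 1 = 0) → A = [8, 6] ∧ C = [-2] := by
  refine ⟨isUlrich3_eight_six_five_zero_neg_two, fun A C h ⟨a, ha, hcol⟩ => ?_⟩
  have := h.five_lt_of_mem_left ha
  obtain rfl : a = 6 := by omega
  exact h.eq_of_six_mem ha
end

section
/- For every m ≥ 0 with k = (4^{m+1}-1)/3, the Ulrich partition (2 | 1, 0 | C_k) of type (1,2,k) has dimension 4^{m+1} + 1, and its set of intersection times is exactly {1, 2, ..., 4^{m+1}+1}. -/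
/-- The `j`-th entry (`j ≥ 1`) of the sequence of `c`-values produced by the greedy algorithm
applied to `(2 | 1, 0 | ∅)`. -/
def cval (j : ℕ) : ℤ :=
  -2 * 4 ^ (Nat.log 4 (3 * j)) - 2 * ((j - (4 ^ (Nat.log 4 (3 * j)) - 1) / 3 : ℕ) : ℤ)

/-- The `C`-block obtained from `(2 | 1, 0 | ∅)` by greedily adding `k` `c`-entries. -/
def Ck (k : ℕ) : List ℤ := (List.range k).map (fun i => cval (i + 1))

/-! For `3 k = 4 ^ (m + 1) - 1` the entries of `C_k` are the numbers `-2 s` with `s` in one of the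
blocks `(4 ^ b, 2 * 4 ^ b]`, `b ≤ m`. At time `t ≥ 3` the entries `2 - t, 1, 0` are distinct, and so
are the shifted `c`'s; `2 - t` meets `-2 s + t` iff `s = t - 1`, while `0` or `1` meets it iff
`s = ⌊t / 2⌋`. For `t` in `[4 ^ b + 2, 4 ^ (b + 1) + 1]` exactly one of `t - 1`, `⌊t / 2⌋` lies in a
block (the first up to `2 * 4 ^ b + 1`, the second afterwards), so each `t ≤ 4 ^ (m + 1) + 1`
carries exactly one coincidence (for `t = 1, 2` it is `2 - t ∈ {1, 0}`) and later times none. -/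

lemma card_toFinset_cons {α : Type*} [DecidableEq α] (a : α) (l : List α) :
    (a :: l).toFinset.card = l.toFinset.card + if a ∈ l then 0 else 1 := by
  by_cases h : a ∈ l <;> simp [h]

lemma nodup_iff_toFinset_card_eq_length {α : Type*} [DecidableEq α] (l : List α) :
    l.Nodup ↔ l.toFinset.card = l.length := by
  simpa using (Multiset.toFinset_card_eq_card_iff_nodup (m := (l : Multiset α))).symm

lemma three_mul_four_pow_sub_one_div (b : ℕ) : 3 * ((4 ^ b - 1) / 3) = 4 ^ b - 1 :=
  Nat.mul_div_cancel' (by simpa using Nat.sub_dvd_pow_sub_pow 4 1 b)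

lemma cval_neg (j : ℕ) : cval j < 0 := by
  unfold cval
  have := pow_pos (show (0 : ℤ) < 4 by norm_num) (Nat.log 4 (3 * j))
  omega

lemma cval_block (b r : ℕ) (hr : 1 ≤ r) (hr' : r ≤ 4 ^ b) :
    cval ((4 ^ b - 1) / 3 + r) = -2 * ((4 ^ b + r : ℕ) : ℤ) := by
  have h3 := three_mul_four_pow_sub_one_div b
  have hlog : Nat.log 4 (3 * ((4 ^ b - 1) / 3 + r)) = b :=
    Nat.log_eq_of_pow_le_of_lt_pow (by omega) (by rw [pow_succ]; omega)
  rw [cval, hlog, Nat.add_sub_cancel_left]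
  push_cast
  ring

lemma exists_eq_block (j : ℕ) (hj : 1 ≤ j) :
    ∃ b r, 1 ≤ r ∧ r ≤ 4 ^ b ∧ j = (4 ^ b - 1) / 3 + r := by
  set b := Nat.log 4 (3 * j)
  have hle : 4 ^ b ≤ 3 * j := Nat.pow_log_le_self 4 (by omega)
  have hlt : 3 * j < 4 ^ (b + 1) := Nat.lt_pow_succ_log_self (by norm_num) _
  have h3 := three_mul_four_pow_sub_one_div b
  rw [pow_succ] at hlt
  exact ⟨b, j - (4 ^ b - 1) / 3, by omega, by omega, by omega⟩

lemma cval_strictAntiOn : StrictAntiOn cval (Set.Ici 1) := by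
  intro j hj j' hj' hjj'
  obtain ⟨b, r, hr, hr', rfl⟩ := exists_eq_block j hj
  obtain ⟨b', r', hr₁, hr₁', rfl⟩ := exists_eq_block j' hj'
  rw [cval_block b r hr hr', cval_block b' r' hr₁ hr₁']
  have h3 := three_mul_four_pow_sub_one_div b
  have h3' := three_mul_four_pow_sub_one_div b'
  suffices 4 ^ b + r < 4 ^ b' + r' by omega
  rcases lt_trichotomy b b' with h | rfl | h
  · have := Nat.pow_le_pow_right (show 0 < 4 by norm_num) h
    rw [pow_succ] at this
    omega
  · omega
  · have := Nat.pow_le_pow_right (show 0 < 4 by norm_num) h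
    rw [pow_succ] at this
    omega

lemma Ck_length (k : ℕ) : (Ck k).length = k := by simp [Ck]

lemma Ck_pairwise_gt (k : ℕ) : (Ck k).Pairwise (· > ·) :=
  List.pairwise_map.mpr <| List.pairwise_lt_range.imp fun h =>
    cval_strictAntiOn (by simp) (by simp) (by omega)

lemma Ck_nodup (k : ℕ) : (Ck k).Nodup := (Ck_pairwise_gt k).imp ne_of_gt

lemma strictDec_evolve3_zero (k : ℕ) : StrictDec (evolve3 [2] [1, 0] (Ck k) 0) := by
  have hneg : ∀ v ∈ Ck k, v < 0 := by simp [Ck, cval_neg]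
  simp only [StrictDec, evolve3, add_zero, sub_zero, List.map_id', List.map_cons, List.map_nil,
    List.cons_append, List.nil_append]
  show List.IsChain (· > ·) (2 :: 1 :: 0 :: Ck k)
  rw [List.isChain_cons_cons, List.isChain_cons_cons]
  exact ⟨by norm_num, by norm_num,
    List.Pairwise.isChain (List.pairwise_cons.mpr ⟨hneg, Ck_pairwise_gt k⟩)⟩

def InBlock (m s : ℕ) : Prop := ∃ b ≤ m, 4 ^ b < s ∧ s ≤ 2 * 4 ^ b

lemma mem_Ck_iff {m k : ℕ} (hk : 3 * k = 4 ^ (m + 1) - 1) (v : ℤ) :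
    v ∈ Ck k ↔ ∃ s, InBlock m s ∧ v = -2 * s := by
  simp only [Ck, List.mem_map, List.mem_range]
  constructor
  · rintro ⟨i, hi, rfl⟩
    obtain ⟨b, r, hr, hr', hi'⟩ := exists_eq_block (i + 1) (by omega)
    have h3 := three_mul_four_pow_sub_one_div b
    have hbm : b < m + 1 := (Nat.pow_lt_pow_iff_right (a := 4) (by norm_num)).mp (by omega)
    exact ⟨4 ^ b + r, ⟨b, by omega, by omega, by omega⟩, by rw [hi', cval_block b r hr hr']⟩
  · rintro ⟨s, ⟨b, hbm, hs, hs'⟩, rfl⟩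
    have h3 := three_mul_four_pow_sub_one_div b
    have := Nat.pow_le_pow_right (show 0 < 4 by norm_num) (Nat.succ_le_succ hbm)
    rw [pow_succ 4 b] at this
    refine ⟨(4 ^ b - 1) / 3 + (s - 4 ^ b) - 1, by omega, ?_⟩
    rw [Nat.sub_add_cancel (by omega), cval_block b _ (by omega) (by omega),
      Nat.add_sub_cancel' hs.le]

namespace InBlock

variable {m s : ℕ}

lemma one_lt (h : InBlock m s) : 1 < s := by
  obtain ⟨b, -, hs, -⟩ := h
  have := Nat.one_le_pow b 4 (by norm_num)
  omega

lemma le_two_mul_four_pow (h : InBlock m s) : s ≤ 2 * 4 ^ m := by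
  obtain ⟨b, hbm, -, hs⟩ := h
  have := Nat.pow_le_pow_right (show 0 < 4 by norm_num) hbm
  omega

end InBlock

lemma not_inBlock_sub_one_and_half (m t : ℕ) : ¬ (InBlock m (t - 1) ∧ InBlock m (t / 2)) := by
  rintro ⟨⟨b, -, hb, hb'⟩, ⟨c, -, hc, hc'⟩⟩
  rcases le_or_gt b c with h | h
  · have := Nat.pow_le_pow_right (show 0 < 4 by norm_num) h
    omega
  · have := Nat.pow_le_pow_right (show 0 < 4 by norm_num) h
    rw [pow_succ] at this
    omega

lemma inBlock_sub_one_or_half_iff {m t : ℕ} (ht : 3 ≤ t) :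
    InBlock m (t - 1) ∨ InBlock m (t / 2) ↔ t ≤ 4 ^ (m + 1) + 1 := by
  refine ⟨fun h => ?_, fun ht' => ?_⟩
  · rw [pow_succ]
    rcases h with h | h <;> have := h.le_two_mul_four_pow <;> omega
  set b := Nat.log 4 (t - 2)
  have hle : 4 ^ b ≤ t - 2 := Nat.pow_log_le_self 4 (by omega)
  have hlt : t - 2 < 4 ^ (b + 1) := Nat.lt_pow_succ_log_self (by norm_num) _
  have hbm : b ≤ m :=
    Nat.lt_succ_iff.mp <| (Nat.pow_lt_pow_iff_right (a := 4) (by norm_num)).mp (by omega)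
  rw [pow_succ] at hlt
  rcases le_or_gt t (2 * 4 ^ b + 1) with h | h
  · exact .inl ⟨b, hbm, by omega, by omega⟩
  · exact .inr ⟨b, hbm, by omega, by omega⟩

lemma mem_map_add_Ck_iff {m k : ℕ} (hk : 3 * k = 4 ^ (m + 1) - 1) (x t : ℤ) :
    x ∈ (Ck k).map (· + t) ↔ ∃ s, InBlock m s ∧ x + 2 * s = t := by
  simp only [List.mem_map, mem_Ck_iff hk]
  constructor
  · rintro ⟨_, ⟨s, hs, rfl⟩, rfl⟩
    exact ⟨s, hs, by ring⟩
  · rintro ⟨s, hs, rfl⟩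
    exact ⟨_, ⟨s, hs, rfl⟩, by ring⟩

lemma two_sub_mem_map_add_Ck_iff {m k : ℕ} (hk : 3 * k = 4 ^ (m + 1) - 1) (t : ℕ) :
    (2 - t : ℤ) ∈ (Ck k).map (· + (t : ℤ)) ↔ InBlock m (t - 1) := by
  rw [mem_map_add_Ck_iff hk]
  constructor
  · rintro ⟨s, hs, he⟩
    obtain rfl : s = t - 1 := by omega
    exact hs
  · intro hs
    have := hs.one_lt
    exact ⟨t - 1, hs, by omega⟩

lemma natCast_mem_map_add_Ck_iff {m k : ℕ} (hk : 3 * k = 4 ^ (m + 1) - 1) {x : ℕ} (hx : x < 2)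
    (t : ℕ) : (x : ℤ) ∈ (Ck k).map (· + (t : ℤ)) ↔ t % 2 = x ∧ InBlock m (t / 2) := by
  rw [mem_map_add_Ck_iff hk]
  constructor
  · rintro ⟨s, hs, he⟩
    obtain rfl : s = t / 2 := by omega
    exact ⟨by omega, hs⟩
  · exact fun ⟨ht, hs⟩ => ⟨t / 2, hs, by omega⟩

lemma card_toFinset_evolve3 {m k : ℕ} (hk : 3 * k = 4 ^ (m + 1) - 1) (t : ℕ) (ht : 1 ≤ t) :
    (evolve3 [2] [1, 0] (Ck k) t).toFinset.card + (if t ≤ 4 ^ (m + 1) + 1 then 1 else 0) =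
      k + 3 := by
  have hD : ((Ck k).map (· + (t : ℤ))).toFinset.card = k := by
    rw [List.toFinset_card_of_nodup (Ck_nodup k |>.map (add_left_injective _)), List.length_map,
      Ck_length]
  have h2 := two_sub_mem_map_add_Ck_iff hk t
  have h0 := natCast_mem_map_add_Ck_iff hk (x := 0) (by norm_num) t
  have h1 := natCast_mem_map_add_Ck_iff hk (x := 1) (by norm_num) t
  rw [Nat.cast_zero] at h0
  rw [Nat.cast_one] at h1
  classical
  simp only [evolve3, List.map_cons, List.map_nil, List.cons_append, List.nil_append,
    card_toFinset_cons, List.mem_cons, hD, h0, h1, h2]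
  rcases le_or_gt t 2 with ht2 | ht3
  · have hP : ¬ InBlock m (t - 1) := fun h => by have := h.one_lt; omega
    have hQ : ¬ InBlock m (t / 2) := fun h => by have := h.one_lt; omega
    have := Nat.one_le_pow (m + 1) 4 (by norm_num)
    simp only [hP, hQ, and_false, or_false, if_false]
    split_ifs <;> omega
  · have hexcl := not_inBlock_sub_one_and_half m t
    have hcov := inBlock_sub_one_or_half_iff (m := m) ht3
    by_cases hP : InBlock m (t - 1) <;> by_cases hQ : InBlock m (t / 2) <;>
      simp only [hP, hQ, and_true, and_false, or_true, or_false, not_true_eq_false, true_iff,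
        false_iff] at hexcl hcov ⊢ <;>
      split_ifs <;> omega

/-- For `k = (4^(m+1) - 1)/3`, the Ulrich partition `(2 | 1, 0 | C_k)` of type `(1, 2, k)` has
dimension `4^(m+1) + 1`, and its set of intersection times is exactly `{1, ..., 4^(m+1)+1}`. -/
theorem stmt14 (m k : ℕ) (hk : 3 * k = 4 ^ (m + 1) - 1) :
    dim3 [2] [1, 0] (Ck k) = 4 ^ (m + 1) + 1 ∧
    IsUlrich3 [2] [1, 0] (Ck k) ∧
    ∀ t : ℕ, 1 ≤ t →
      (¬ (evolve3 [2] [1, 0] (Ck k) (t : ℤ)).Nodup ↔ t ≤ 4 ^ (m + 1) + 1) := by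
  have h4 : 4 ≤ 4 ^ (m + 1) := Nat.le_self_pow (Nat.succ_ne_zero m) 4
  have hdim : dim3 [2] [1, 0] (Ck k) = 4 ^ (m + 1) + 1 := by
    simp only [dim3, List.length_cons, List.length_nil, Ck_length]
    omega
  have hlen (t : ℤ) : (evolve3 [2] [1, 0] (Ck k) t).length = k + 3 := by
    simp [evolve3, Ck_length]
  refine ⟨hdim, ⟨List.cons_ne_nil _ _, ?_, strictDec_evolve3_zero k, fun t ht htN => ?_⟩,
    fun t ht => ?_⟩
  · rw [← List.length_pos_iff, Ck_length]
    omega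
  · have := card_toFinset_evolve3 hk t ht
    rw [if_pos (hdim ▸ htN)] at this
    rwa [OneRepeat, hlen]
  · have := card_toFinset_evolve3 hk t ht
    rw [nodup_iff_toFinset_card_eq_length, hlen]
    split_ifs at this <;> omega
end
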